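/- Let C be a mini-chamber of type (t, β, ω) in I ⊂ (0, +∞). If m₁, m₂ ∈ C, then the moduli sets of semistable objects coincide: an object E of numerical type t is (Z_{m₁}, P_{m₁})-semistable if and only if it is (Z_{m₂}, P_{m₂})-semistable. -/
import Mathlib



private lemma stmt11_aux (Obj : Type*) (phase : ℝ → Obj → ℝ)
    (semistable : ℝ → Obj → Prop) (leadHN : ℝ → Obj → Obj)
    (isTypeT : Obj → Prop) (I : Set ℝ) (hI : I ⊆ Set.Ioi 0)
    (MiniWall : ℝ → Prop)
    (hMW : ∀ m₀, MiniWall m₀ ↔ m₀ ∈ I ∧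
      ∃ (E : Obj) (m₁ m₂ : ℝ), isTypeT E ∧ m₁ ∈ I ∧ m₂ ∈ I ∧
        semistable m₁ E ∧ ¬ semistable m₂ E ∧
        phase m₀ (leadHN m₂ E) = phase m₀ E)
    (hdest : ∀ m E, ¬ semistable m E → phase m E < phase m (leadHN m E))
    (hsub : ∀ m m' E, semistable m E → phase m (leadHN m' E) ≤ phase m E)
    (hcont : ∀ E A : Obj, ContinuousOn (fun m => phase m A - phase m E) (Set.Ioi 0))
    (m₀ m₁ m₂ : ℝ) (hm₀ : m₀ ∈ I \ {m | MiniWall m})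
    (hm₁ : m₁ ∈ connectedComponentIn (I \ {m | MiniWall m}) m₀)
    (hm₂ : m₂ ∈ connectedComponentIn (I \ {m | MiniWall m}) m₀)
    (E : Obj) (hE : isTypeT E) (h1 : semistable m₁ E) : semistable m₂ E := by
  by_contra h2
  set C := connectedComponentIn (I \ {m | MiniWall m}) m₀ with hC
  have hsubset : C ⊆ I \ {m | MiniWall m} := connectedComponentIn_subset _ _
  have hCIoi : C ⊆ Set.Ioi 0 := fun x hx => hI (hsubset hx).1
  have hconn : IsPreconnected C :=
    (isConnected_connectedComponentIn_iff.mpr hm₀).isPreconnected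
  set f : ℝ → ℝ := fun m => phase m (leadHN m₂ E) - phase m E with hf
  have hfc : ContinuousOn f C := (hcont E (leadHN m₂ E)).mono hCIoi
  have h1' : f m₁ ≤ 0 := sub_nonpos.mpr (hsub m₁ m₂ E h1)
  have h2' : 0 ≤ f m₂ := le_of_lt (sub_pos.mpr (hdest m₂ E h2))
  have := hconn.intermediate_value hm₁ hm₂ hfc (Set.mem_Icc.mpr ⟨h1', h2'⟩)
  obtain ⟨x, hx, hfx⟩ := this
  have hwall : MiniWall x := (hMW x).mpr ⟨(hsubset hx).1,
    E, m₁, m₂, hE, (hsubset hm₁).1, (hsubset hm₂).1, h1, h2, sub_eq_zero.mp hfx⟩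
  exact (hsubset hx).2 hwall

/-- In a mini-chamber (connected component of `I` minus the mini-walls),
semistability of an object of numerical type `t` does not change: if
`m₁, m₂` lie in the same mini-chamber then `E` is semistable at `m₁` iff at
`m₂`. The hypotheses encode: the leading HN component strictly destabilizes
an unstable object, semistability forces its phase to be `≤` that of `E`
at any other parameter, and phase differences vary continuously. -/
theorem stmt11 (Obj : Type*) (phase : ℝ → Obj → ℝ)
    (semistable : ℝ → Obj → Prop) (leadHN : ℝ → Obj → Obj)
    (isTypeT : Obj → Prop) (I : Set ℝ) (hI : I ⊆ Set.Ioi 0)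
    (MiniWall : ℝ → Prop)
    (hMW : ∀ m₀, MiniWall m₀ ↔ m₀ ∈ I ∧
      ∃ (E : Obj) (m₁ m₂ : ℝ), isTypeT E ∧ m₁ ∈ I ∧ m₂ ∈ I ∧
        semistable m₁ E ∧ ¬ semistable m₂ E ∧
        phase m₀ (leadHN m₂ E) = phase m₀ E)
    (hdest : ∀ m E, ¬ semistable m E → phase m E < phase m (leadHN m E))
    (hsub : ∀ m m' E, semistable m E → phase m (leadHN m' E) ≤ phase m E)
    (hcont : ∀ E A : Obj, ContinuousOn (fun m => phase m A - phase m E) (Set.Ioi 0))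
    (m₀ m₁ m₂ : ℝ) (hm₀ : m₀ ∈ I \ {m | MiniWall m})
    (hm₁ : m₁ ∈ connectedComponentIn (I \ {m | MiniWall m}) m₀)
    (hm₂ : m₂ ∈ connectedComponentIn (I \ {m | MiniWall m}) m₀)
    (E : Obj) (hE : isTypeT E) :
    (semistable m₁ E ↔ semistable m₂ E) := by
  constructor
  · exact stmt11_aux Obj phase semistable leadHN isTypeT I hI MiniWall hMW hdest hsub hcont m₀ m₁ m₂ hm₀ hm₁ hm₂ E hE
  · exact stmt11_aux Obj phase semistable leadHN isTypeT I hI MiniWall hMW hdest hsub hcont m₀ m₂ m₁ hm₀ hm₂ hm₁ E hE
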